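/- arXiv:1512.03365 — 9 statements merged into one kernel-verified Lean document; each statement's English description precedes it below -/
import Mathlib

section
/- For a continuous map f on a compact metric space (X,d), the strong chain recurrent set is forward invariant: f(SCR_d(f)) ⊆ SCR_d(f). -/
/-- A strong (ε,f,d)-chain from x to y. -/
def IsStrongChain {X : Type*} [MetricSpace X] (f : X → X) (ε : ℝ) (x y : X) : Prop :=
  ∃ n : ℕ, 1 ≤ n ∧ ∃ c : ℕ → X, c 0 = x ∧ c n = y ∧
    ∑ i ∈ Finset.range n, dist (f (c i)) (c (i + 1)) ≤ ε

/-- The strong chain recurrent set SCR_d(f). -/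
def SCR {X : Type*} [MetricSpace X] (f : X → X) : Set X :=
  {x | ∀ ε : ℝ, 0 < ε → IsStrongChain f ε x x}

/-- The strong chain recurrent set is forward invariant: f(SCR_d(f)) ⊆ SCR_d(f). -/
theorem scr_forward_invariant {X : Type*} [MetricSpace X] [CompactSpace X]
    (f : X → X) (hf : Continuous f) : f '' SCR f ⊆ SCR f := by
  rintro _ ⟨x, hx, rfl⟩
  intro ε hε
  obtain ⟨δ₀, hδ₀, hδ⟩ := Metric.uniformContinuous_iff.mp
    (CompactSpace.uniformContinuous_of_continuous hf) (ε/2) (by linarith)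
  set δ' := min (ε/2) (δ₀/2) with hδ'def
  have hδ'pos : 0 < δ' := lt_min (by linarith) (by linarith)
  have hδ'lt : δ' < δ₀ := lt_of_le_of_lt (min_le_right _ _) (by linarith)
  obtain ⟨n, hn1, c, hc0, hcn, hsum⟩ := hx δ' hδ'pos
  have hterm : ∀ i, i < n → dist (f (c i)) (c (i+1)) ≤ δ' := by
    intro i hi
    exact le_trans (Finset.single_le_sum (f := fun i => dist (f (c i)) (c (i+1)))
      (fun _ _ => dist_nonneg) (Finset.mem_range.mpr hi)) hsum
  have h01 : dist (f x) (c 1) ≤ δ' := by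
    have := hterm 0 hn1; rwa [hc0] at this
  have hux : dist (f (f x)) (f (c 1)) < ε/2 :=
    hδ (lt_of_le_of_lt h01 hδ'lt)
  rcases Nat.lt_or_ge n 2 with hn2 | hn2
  · -- n = 1
    interval_cases n
    refine ⟨1, le_refl 1, fun _ => f x, rfl, rfl, ?_⟩
    rw [Finset.sum_range_one]
    rw [hcn] at hux
    calc dist (f (f x)) (f x) ≤ ε/2 := le_of_lt hux
      _ ≤ ε := by linarith
  · -- n = m + 2
    obtain ⟨m, rfl⟩ : ∃ m, n = m + 2 := ⟨n - 2, by omega⟩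
    set b : ℕ → X := fun i => if i = 0 ∨ m + 2 ≤ i then f x else c (i+1) with hb
    refine ⟨m + 2, by omega, b, by simp [hb], by simp [hb], ?_⟩
    have hb0 : b 0 = f x := by simp [hb]
    have hbn : b (m+2) = f x := by simp [hb]
    have hbmid : ∀ i, 1 ≤ i → i ≤ m + 1 → b i = c (i+1) := by
      intro i h1 h2; simp only [hb]; rw [if_neg]; omega
    set D : ℕ → ℝ := fun i => dist (f (b i)) (b (i+1)) with hD
    have hlast : D (m+1) = 0 := by
      simp only [hD]
      rw [hbmid (m+1) (by omega) (le_refl _), hbn, hcn, dist_self]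
    have hfirst : D 0 ≤ ε/2 + dist (f (c 1)) (c 2) := by
      simp only [hD]
      rw [hb0, hbmid 1 (le_refl _) (by omega)]
      calc dist (f (f x)) (c 2) ≤ dist (f (f x)) (f (c 1)) + dist (f (c 1)) (c 2) :=
            dist_triangle _ _ _
        _ ≤ ε/2 + dist (f (c 1)) (c 2) := by linarith
    have hmidd : ∀ i, i < m → D (i+1) = dist (f (c (i+2))) (c (i+3)) := by
      intro i hi
      simp only [hD]
      rw [hbmid (i+1) (by omega) (by omega), hbmid (i+2) (by omega) (by omega)]
    have hsum' : ∑ i ∈ Finset.range (m+2), D i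
        ≤ ε/2 + (dist (f (c 1)) (c 2) + ∑ i ∈ Finset.range m, dist (f (c (i+2))) (c (i+3))) := by
      rw [Finset.sum_range_succ, hlast, add_zero, Finset.sum_range_succ']
      have : ∑ i ∈ Finset.range m, D (i+1) = ∑ i ∈ Finset.range m, dist (f (c (i+2))) (c (i+3)) :=
        Finset.sum_congr rfl (fun i hi => hmidd i (Finset.mem_range.mp hi))
      rw [this]
      linarith [hfirst]
    have hsum'' : dist (f (c 1)) (c 2) + ∑ i ∈ Finset.range m, dist (f (c (i+2))) (c (i+3)) ≤ δ' := by
      have e : ∑ i ∈ Finset.range (m+2), dist (f (c i)) (c (i+1))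
          = (∑ i ∈ Finset.range m, dist (f (c (i+2))) (c (i+3)))
            + dist (f (c 1)) (c 2) + dist (f (c 0)) (c 1) := by
        rw [Finset.sum_range_succ' (fun i => dist (f (c i)) (c (i+1))) (m+1),
          Finset.sum_range_succ' (fun i => dist (f (c (i+1))) (c (i+2))) m]
      rw [e] at hsum
      have : (0:ℝ) ≤ dist (f (c 0)) (c 1) := dist_nonneg
      linarith
    calc ∑ i ∈ Finset.range (m+2), D i ≤ ε/2 + δ' := by linarith
      _ ≤ ε := by
        have : δ' ≤ ε/2 := min_le_left _ _
        linarith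
end

section
/- Let θ : X → ℝ be a Lyapunov function for f that is Lipschitz with respect to d. Then SCR_d(f) ⊆ N(θ), i.e., every strong chain recurrent point x satisfies θ(f(x)) = θ(x). -/
lemma chain_estimate {X : Type*} [MetricSpace X]
    (f : X → X) (θ : X → ℝ) (K : NNReal) (hθ : LipschitzWith K θ)
    (hlyap : ∀ x : X, θ (f x) ≤ θ x) (c : ℕ → X) :
    ∀ m : ℕ, 1 ≤ m →
      θ (c m) ≤ θ (f (c 0)) + K * ∑ i ∈ Finset.range m, dist (f (c i)) (c (i + 1)) := by
  intro m hm
  induction m with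
  | zero => omega
  | succ m ih =>
    have step : θ (c (m + 1)) ≤ θ (f (c m)) + K * dist (f (c m)) (c (m + 1)) := by
      have h := hθ.dist_le_mul (c (m + 1)) (f (c m))
      have h2 : θ (c (m + 1)) - θ (f (c m)) ≤ dist (θ (c (m + 1))) (θ (f (c m))) :=
        by rw [Real.dist_eq]; exact le_abs_self _
      have := h2.trans h
      rw [dist_comm] at this
      linarith
    rcases Nat.eq_or_lt_of_le (Nat.one_le_iff_ne_zero.mpr (Nat.succ_ne_zero m))
      with h | h
    · -- m = 0
      have hm0 : m = 0 := by omega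
      subst hm0
      simpa using step
    · have hm1 : 1 ≤ m := by omega
      have ih' := ih hm1
      have hlm : θ (f (c m)) ≤ θ (c m) := hlyap _
      rw [Finset.sum_range_succ, mul_add]
      linarith

/-- If θ is a Lipschitz Lyapunov function for f, then SCR_d(f) ⊆ N(θ). -/
theorem scr_subset_neutral {X : Type*} [MetricSpace X] [CompactSpace X]
    (f : X → X) (hf : Continuous f)
    (θ : X → ℝ) (K : NNReal) (hθ : LipschitzWith K θ)
    (hlyap : ∀ x : X, θ (f x) ≤ θ x) :
    SCR f ⊆ {x | θ (f x) = θ x} := by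
  intro x hx
  refine le_antisymm (hlyap x) ?_
  have key : ∀ ε : ℝ, 0 < ε → θ x ≤ θ (f x) + ε := by
    intro ε hε
    have hKpos : (0:ℝ) < (K:ℝ) + 1 := by positivity
    obtain ⟨n, hn, c, hc0, hcn, hsum⟩ := hx (ε / ((K:ℝ) + 1)) (by positivity)
    have hest := chain_estimate f θ K hθ hlyap c n hn
    rw [hc0, hcn] at hest
    have hKnn : (0:ℝ) ≤ K := K.coe_nonneg
    have : (K:ℝ) * ∑ i ∈ Finset.range n, dist (f (c i)) (c (i + 1)) ≤
        (K:ℝ) * (ε / ((K:ℝ) + 1)) := by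
      apply mul_le_mul_of_nonneg_left ?_ hKnn
      simpa [hc0] using hsum
    have hKe : (K:ℝ) * (ε / ((K:ℝ) + 1)) ≤ ε := by
      rw [mul_div_assoc'] at *
      rw [div_le_iff₀ hKpos]
      nlinarith
    linarith
  exact le_of_forall_pos_le_add key
end

section
/- For every k ≥ 1 and every compatible metric d, SCR_d(f^k) ⊆ SCR_d(f). -/
lemma isStrongChain_mono {X : Type*} [MetricSpace X] {f : X → X} {ε ε' : ℝ} {x y : X}
    (h : IsStrongChain f ε x y) (hε : ε ≤ ε') : IsStrongChain f ε' x y := by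
  obtain ⟨n, hn, c, h0, h1, hs⟩ := h
  exact ⟨n, hn, c, h0, h1, hs.trans hε⟩

lemma isStrongChain_trans {X : Type*} [MetricSpace X] {f : X → X} {ε₁ ε₂ : ℝ} {x y z : X}
    (h₁ : IsStrongChain f ε₁ x y) (h₂ : IsStrongChain f ε₂ y z) :
    IsStrongChain f (ε₁ + ε₂) x z := by
  obtain ⟨n, hn, c, hc0, hcn, hs⟩ := h₁
  obtain ⟨m, hm, c', hc0', hcm, hs'⟩ := h₂
  refine ⟨n + m, by omega, fun i => if i < n then c i else c' (i - n), ?_, ?_, ?_⟩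
  · simp [show 0 < n by omega, hc0]
  · simp only [show ¬ (n + m < n) by omega, if_false]
    simpa using hcm
  · rw [Finset.sum_range_add]
    refine add_le_add (le_trans (le_of_eq ?_) hs) (le_trans (le_of_eq ?_) hs')
    · apply Finset.sum_congr rfl
      intro i hi
      simp only [Finset.mem_range] at hi
      by_cases h : i + 1 < n
      · simp [hi, h]
      · have hin : i + 1 = n := by omega
        simp only [hi, if_true, h, if_false, hin, Nat.sub_self, hc0', hcn, ite_self]
    · apply Finset.sum_congr rfl
      intro i hi
      simp only [show ¬ (n + i < n) by omega, show ¬ (n + i + 1 < n) by omega, if_false,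
        Nat.add_sub_cancel_left, show n + i + 1 - n = i + 1 by omega]

lemma isStrongChain_step {X : Type*} [MetricSpace X] (f : X → X) {k : ℕ} (hk : 1 ≤ k)
    {x y : X} {ε : ℝ} (h : dist (f^[k] x) y ≤ ε) : IsStrongChain f ε x y := by
  obtain ⟨m, rfl⟩ : ∃ m, k = m + 1 := ⟨k - 1, by omega⟩
  refine ⟨m + 1, by omega, fun i => if i < m + 1 then f^[i] x else y, by simp, by simp, ?_⟩
  rw [Finset.sum_range_succ]
  have h1 : ∑ i ∈ Finset.range m, dist
      (f ((fun i => if i < m + 1 then f^[i] x else y) i))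
      ((fun i => if i < m + 1 then f^[i] x else y) (i + 1)) = 0 := by
    apply Finset.sum_eq_zero
    intro i hi
    simp only [Finset.mem_range] at hi
    simp [show i < m + 1 by omega, show i + 1 < m + 1 by omega,
      ← Function.iterate_succ_apply' f i x]
  rw [h1, zero_add]
  simpa [← Function.iterate_succ_apply' f m x] using h

/-- For every k ≥ 1, SCR_d(f^k) ⊆ SCR_d(f). -/
theorem scr_iterate_subset {X : Type*} [MetricSpace X] [CompactSpace X]
    (f : X → X) (hf : Continuous f) (k : ℕ) (hk : 1 ≤ k) :
    SCR (f^[k]) ⊆ SCR f := by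
  intro x hx ε hε
  obtain ⟨n, hn, c, hc0, hcn, hs⟩ := hx ε hε
  have key : ∀ m : ℕ, 1 ≤ m → ∀ c : ℕ → X,
      IsStrongChain f (∑ i ∈ Finset.range m, dist (f^[k] (c i)) (c (i + 1))) (c 0) (c m) := by
    intro m hm
    induction m, hm using Nat.le_induction with
    | base =>
      intro c
      rw [Finset.sum_range_one]
      exact isStrongChain_step f hk le_rfl
    | succ m hm ih =>
      intro c
      rw [Finset.sum_range_succ]
      exact isStrongChain_trans (ih c) (isStrongChain_step f hk le_rfl)
  have := key n hn c
  rw [hc0, hcn] at this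
  exact isStrongChain_mono this hs
end

section
/- The relation C = {(y,z) : for every sequence Σ of neighborhoods of the diagonal there is a (Σ,f)-chain from y to z} is a closed subset of X × X. -/
/-- A (Σ,f)-chain from x to y, for a sequence S of neighborhoods of the diagonal:
a finite sequence x = c 0, ..., c n = y (n ≥ 1) together with an injection σ on
{0,...,n-1} such that (f (c i), c (i+1)) ∈ S (σ i) for all i < n. -/
def IsSigmaChain {X : Type*} (f : X → X) (S : ℕ → Set (X × X)) (x y : X) : Prop :=
  ∃ n : ℕ, 1 ≤ n ∧ ∃ c : ℕ → X, ∃ σ : ℕ → ℕ, Set.InjOn σ (Set.Iio n) ∧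
    c 0 = x ∧ c n = y ∧ ∀ i < n, (f (c i), c (i + 1)) ∈ S (σ i)

/-- The relation relating y to z when there is a (Σ,f)-chain from y to z for every
sequence Σ of neighborhoods of the diagonal. -/
def CRel {X : Type*} [TopologicalSpace X] (f : X → X) : Set (X × X) :=
  {p | ∀ S : ℕ → Set (X × X), (∀ i, S i ∈ nhdsSet (Set.diagonal X)) →
    IsSigmaChain f S p.1 p.2}

/-- The relation C is closed in X × X. -/
theorem crel_isClosed {X : Type*} [MetricSpace X] [CompactSpace X]
    (f : X → X) (hf : Continuous f) : IsClosed (CRel f) := by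
  apply isClosed_of_closure_subset
  rintro ⟨y, z⟩ hyz
  intro S hS
  have hU : ∀ i, S i ∈ uniformity X := by
    intro i
    rw [← nhdsSet_diagonal_eq_uniformity]
    exact hS i
  have hε : ∀ i, ∃ ε > 0, ∀ p : X × X, dist p.1 p.2 < ε → p ∈ S i := by
    intro i
    rcases Metric.mem_uniformity_dist.mp (hU i) with ⟨ε, hεp, h⟩
    exact ⟨ε, hεp, fun p hp => h hp⟩
  choose ε hεpos hball using hε
  set η := min (ε 0) (ε 1) with hηdef
  have hηpos : 0 < η := lt_min (hεpos 0) (hεpos 1)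
  have hfu : UniformContinuous f := CompactSpace.uniformContinuous_of_continuous hf
  obtain ⟨δ, hδpos, hδ⟩ := Metric.uniformContinuous_iff.mp hfu (η / 4) (by positivity)
  obtain ⟨p, hpC, hpd⟩ := Metric.mem_closure_iff.mp hyz (min δ (η / 4))
    (lt_min hδpos (by positivity))
  have hy1 : dist y p.1 < min δ (η / 4) :=
    lt_of_le_of_lt (by rw [Prod.dist_eq]; exact le_max_left _ _) hpd
  have hz2 : dist z p.2 < min δ (η / 4) :=
    lt_of_le_of_lt (by rw [Prod.dist_eq]; exact le_max_right _ _) hpd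
  have hfy : dist (f y) (f p.1) < η / 4 := hδ (lt_of_lt_of_le hy1 (min_le_left _ _))
  have hz2' : dist z p.2 < η / 4 := lt_of_lt_of_le hz2 (min_le_right _ _)
  set S' : ℕ → Set (X × X) := fun i => {q | dist q.1 q.2 < min (ε (i + 2)) η / 4} with hS'def
  have hS' : ∀ i, S' i ∈ nhdsSet (Set.diagonal X) := by
    intro i
    rw [nhdsSet_diagonal_eq_uniformity]
    have : 0 < min (ε (i + 2)) η / 4 := by
      have := hεpos (i + 2); positivity
    exact Metric.dist_mem_uniformity this
  obtain ⟨n, hn, c, σ, hσ, hc0, hcn, hlink⟩ := hpC S' hS'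
  have hlink' : ∀ i < n, dist (f (c i)) (c (i + 1)) < min (ε (σ i + 2)) η / 4 := hlink
  set c' : ℕ → X := fun i => if i = 0 then y else if i = n then z else c i with hc'def
  set σ' : ℕ → ℕ := fun i => if i = 0 then 0 else if i = n - 1 then 1 else σ i + 2 with hσ'def
  have hc'0 : c' 0 = y := if_pos rfl
  have hc'n : c' n = z := by simp [hc'def, Nat.one_le_iff_ne_zero.mp hn]
  have hc'mid : ∀ j, j ≠ 0 → j ≠ n → c' j = c j := by
    intro j h1 h2; simp [hc'def, h1, h2]
  refine ⟨n, hn, c', σ', ?_, hc'0, hc'n, ?_⟩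
  · intro a ha b hb hab
    simp only [Set.mem_Iio] at ha hb
    simp only [hσ'def] at hab
    by_cases ha0 : a = 0
    · by_cases hb0 : b = 0
      · omega
      · rw [if_pos ha0, if_neg hb0] at hab
        by_cases hb1 : b = n - 1
        · rw [if_pos hb1] at hab; omega
        · rw [if_neg hb1] at hab; omega
    · by_cases hb0 : b = 0
      · rw [if_neg ha0, if_pos hb0] at hab
        by_cases ha1 : a = n - 1
        · rw [if_pos ha1] at hab; omega
        · rw [if_neg ha1] at hab; omega
      · rw [if_neg ha0, if_neg hb0] at hab
        by_cases ha1 : a = n - 1 <;> by_cases hb1 : b = n - 1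
        · omega
        · rw [if_pos ha1, if_neg hb1] at hab; omega
        · rw [if_neg ha1, if_pos hb1] at hab; omega
        · rw [if_neg ha1, if_neg hb1] at hab
          exact hσ ha hb (by omega)
  · intro i hi
    by_cases hi0 : i = 0
    · subst hi0
      have hσ'0 : σ' 0 = 0 := if_pos rfl
      rw [hσ'0, hc'0]
      apply hball 0
      have h0 : dist (f (c 0)) (c 1) < η / 4 :=
        lt_of_lt_of_le (hlink' 0 hi) (by
          have := min_le_right (ε (σ 0 + 2)) η
          linarith)
      rw [hc0] at h0
      have hηle : η ≤ ε 0 := min_le_left _ _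
      by_cases hn1 : n = 1
      · have hc'1 : c' 1 = z := hn1 ▸ hc'n
        have hc1 : c 1 = p.2 := hn1 ▸ hcn
        rw [hc'1]
        have hzc1 : dist (c 1) z < η / 4 := by rw [hc1, dist_comm]; exact hz2'
        calc dist (f y, z).1 (f y, z).2 = dist (f y) z := rfl
          _ ≤ dist (f y) (f p.1) + dist (f p.1) (c 1) + dist (c 1) z := by
              have h1 := dist_triangle (f y) (f p.1) (c 1)
              have h2 := dist_triangle (f y) (c 1) z
              linarith
          _ < η / 4 + η / 4 + η / 4 := by linarith
          _ < ε 0 := by linarith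
      · have hc'1 : c' 1 = c 1 := hc'mid 1 one_ne_zero (by omega)
        rw [hc'1]
        calc dist (f y, c 1).1 (f y, c 1).2 = dist (f y) (c 1) := rfl
          _ ≤ dist (f y) (f p.1) + dist (f p.1) (c 1) := dist_triangle _ _ _
          _ < η / 4 + η / 4 := by linarith
          _ < ε 0 := by linarith
    · by_cases hi1 : i = n - 1
      · have hn2 : 2 ≤ n := by omega
        have hσ'i : σ' i = 1 := by rw [hσ'def]; simp only [if_neg hi0, if_pos hi1]
        have hci : c' i = c i := hc'mid i hi0 (by omega)
        have hin1 : i + 1 = n := by omega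
        have hci1 : c' (i + 1) = z := by rw [hin1, hc'n]
        rw [hσ'i, hci, hci1]
        apply hball 1
        have h0 : dist (f (c i)) (c (i + 1)) < η / 4 :=
          lt_of_lt_of_le (hlink' i hi) (by
            have := min_le_right (ε (σ i + 2)) η
            linarith)
        rw [hin1, hcn] at h0
        have hηle : η ≤ ε 1 := min_le_right _ _
        calc dist (f (c i), z).1 (f (c i), z).2 = dist (f (c i)) z := rfl
          _ ≤ dist (f (c i)) p.2 + dist p.2 z := dist_triangle _ _ _
          _ < η / 4 + η / 4 := by rw [dist_comm p.2 z]; linarith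
          _ < ε 1 := by linarith
      · have hσ'i : σ' i = σ i + 2 := by
          rw [hσ'def]; simp only [if_neg hi0, if_neg hi1]
        have hci : c' i = c i := hc'mid i hi0 (by omega)
        have hci1 : c' (i + 1) = c (i + 1) := hc'mid (i + 1) (by omega) (by omega)
        rw [hσ'i, hci, hci1]
        apply hball (σ i + 2)
        have h0 : dist (f (c i)) (c (i + 1)) < ε (σ i + 2) / 4 :=
          lt_of_lt_of_le (hlink' i hi) (by
            have := min_le_left (ε (σ i + 2)) η
            linarith)
        have := hεpos (σ i + 2)
        calc dist (f (c i), c (i + 1)).1 (f (c i), c (i + 1)).2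
            = dist (f (c i)) (c (i + 1)) := rfl
          _ < ε (σ i + 2) := by linarith
end

section
/- If for every sequence Σ of neighborhoods of the diagonal there is a (Σ,f)-chain from y to z, then for every compatible metric d' and every ε > 0 there is a strong (ε,f,d')-chain from y to z. -/
/-- A strong (ε,f,d)-chain from x to y, for a distance function d. -/
def IsStrongChainD {X : Type*} (d : X → X → ℝ) (f : X → X) (ε : ℝ) (x y : X) : Prop :=
  ∃ n : ℕ, 1 ≤ n ∧ ∃ c : ℕ → X, c 0 = x ∧ c n = y ∧
    ∑ i ∈ Finset.range n, d (f (c i)) (c (i + 1)) ≤ ε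

/-- If there is a (Σ,f)-chain from y to z for every sequence Σ of neighborhoods of
the diagonal, then for every compatible metric d' and every ε > 0 there is a strong
(ε,f,d')-chain from y to z. -/
theorem sigma_chain_imp_strong_chains {X : Type*} [t : TopologicalSpace X] [CompactSpace X]
    (f : X → X) (hf : Continuous f) (y z : X)
    (h : ∀ S : ℕ → Set (X × X), (∀ i, S i ∈ nhdsSet (Set.diagonal X)) →
      IsSigmaChain f S y z) :
    ∀ m' : MetricSpace X, m'.toUniformSpace.toTopologicalSpace = t →
      ∀ ε : ℝ, 0 < ε → IsStrongChainD (@dist X m'.toDist) f ε y z := by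
  intro m' htop ε hε
  subst htop
  letI := m'
  set S : ℕ → Set (X × X) := fun i => {p | dist p.1 p.2 < ε / 2 ^ (i + 1)} with hS
  have hSnhds : ∀ i, S i ∈ nhdsSet (Set.diagonal X) := by
    intro i
    have hopen : IsOpen (S i) :=
      isOpen_lt (continuous_dist.comp (continuous_fst.prodMk continuous_snd)) continuous_const
    refine hopen.mem_nhdsSet.mpr ?_
    rintro ⟨a, b⟩ hab
    have hab' : a = b := hab
    subst hab'
    show dist (a, a).1 (a, a).2 < ε / 2 ^ (i + 1)
    rw [dist_self]
    positivity
  obtain ⟨n, hn, c, σ, hσ, hc0, hcn, hchain⟩ := h S hSnhds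
  refine ⟨n, hn, c, hc0, hcn, ?_⟩
  have h1 : ∑ i ∈ Finset.range n, dist (f (c i)) (c (i + 1))
      ≤ ∑ i ∈ Finset.range n, ε / 2 ^ (σ i + 1) :=
    Finset.sum_le_sum fun i hi => (hchain i (Finset.mem_range.mp hi)).le
  refine h1.trans ?_
  have h2 : ∑ i ∈ Finset.range n, ε / 2 ^ (σ i + 1)
      = ∑ k ∈ (Finset.range n).image σ, ε / 2 ^ (k + 1) := by
    rw [Finset.sum_image]
    intro a ha b hb
    exact hσ (by simpa using ha) (by simpa using hb)
  rw [h2]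
  obtain ⟨N, hN⟩ := ((Finset.range n).image σ).exists_nat_subset_range
  have h3 : ∑ k ∈ (Finset.range n).image σ, ε / 2 ^ (k + 1)
      ≤ ∑ k ∈ Finset.range N, ε / 2 ^ (k + 1) := by
    apply Finset.sum_le_sum_of_subset_of_nonneg hN
    intro k _ _
    positivity
  refine h3.trans ?_
  have h4 : ∀ k : ℕ, ε / 2 ^ (k + 1) = (ε / 2) * (1 / 2) ^ k := by
    intro k; rw [pow_succ, one_div, inv_pow]; ring
  calc ∑ k ∈ Finset.range N, ε / 2 ^ (k + 1)
      = (ε / 2) * ∑ k ∈ Finset.range N, (1 / 2 : ℝ) ^ k := by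
        rw [Finset.mul_sum]; exact Finset.sum_congr rfl fun k _ => h4 k
    _ ≤ (ε / 2) * 2 := by
        apply mul_le_mul_of_nonneg_left (sum_geometric_two_le _) (by positivity)
    _ = ε := by ring
end

section
/- If for some compatible metric d' and every ε > 0 there is a strong (ε,f,d')-chain from y to z, then for every closed neighborhood D of the diagonal in X × X there exist a closed symmetric neighborhood N of the diagonal and an integer n > 0 such that N^{3^n} ⊆ D and there is an (N,f)-chain of length n from y to z. -/
/-- The m-fold relational composition N^m : (a,b) ∈ N^m iff there is a chain of
length m from a to b with consecutive pairs in N. -/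
def relPow {X : Type*} (N : Set (X × X)) (m : ℕ) : Set (X × X) :=
  {p | ∃ c : ℕ → X, c 0 = p.1 ∧ c m = p.2 ∧ ∀ i < m, (c i, c (i + 1)) ∈ N}

/-- An (N,f)-chain of length n from y to z. -/
def IsNChain {X : Type*} (f : X → X) (N : Set (X × X)) (n : ℕ) (y z : X) : Prop :=
  ∃ c : ℕ → X, c 0 = y ∧ c n = z ∧ ∀ i < n, (f (c i), c (i + 1)) ∈ N

/-!
Let `D` contain the `ε`-neighbourhood of the diagonal, take a strong `ε/3`-chain
`x₀, …, xₙ` from `y` to `z` and let `N` be the closed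
`δ`-neighbourhood of the diagonal, `δ = ε / (3 · 3ⁿ)`, together with the jumps
`(f xᵢ, xᵢ₊₁)` and their reverses. An `N`-chain of length `3ⁿ` may reuse a jump any number
of times, but gluing the two ends of a jump into one point makes every use of it free while
lowering all distances by at most its length. Gluing the jumps one after another shows that
the chain moves at most `3ⁿ δ + ∑ d (f xᵢ) xᵢ₊₁ < ε`.
-/

section

variable {X : Type*} {d : X → X → ℝ}

structure IsPseudoDist (d : X → X → ℝ) : Prop where
  self : ∀ x, d x x = 0
  comm : ∀ x y, d x y = d y x
  triangle : ∀ x y z, d x z ≤ d x y + d y z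

theorem isPseudoDist_dist [PseudoMetricSpace X] : IsPseudoDist (dist : X → X → ℝ) :=
  ⟨dist_self, dist_comm, dist_triangle⟩

theorem IsPseudoDist.nonneg (hd : IsPseudoDist d) (x y : X) : 0 ≤ d x y := by
  have := hd.triangle x y x
  rw [hd.self, hd.comm y x] at this
  linarith

/-- The largest pseudo-distance below `d` that identifies `u` with `v`. -/
def glueDist (d : X → X → ℝ) (u v x y : X) : ℝ :=
  min (d x y) (min (d x u + d v y) (d x v + d u y))

theorem glueDist_le (u v x y : X) : glueDist d u v x y ≤ d x y := min_le_left _ _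

theorem IsPseudoDist.glueDist_nonneg (hd : IsPseudoDist d) (u v x y : X) :
    0 ≤ glueDist d u v x y :=
  le_min (hd.nonneg _ _) <|
    le_min (add_nonneg (hd.nonneg _ _) (hd.nonneg _ _)) (add_nonneg (hd.nonneg _ _) (hd.nonneg _ _))

theorem IsPseudoDist.glueDist_left_right (hd : IsPseudoDist d) (u v : X) :
    glueDist d u v u v = 0 := by
  refine le_antisymm ?_ (hd.glueDist_nonneg u v u v)
  calc glueDist d u v u v ≤ d u u + d v v := (min_le_right _ _).trans (min_le_left _ _)
    _ = 0 := by rw [hd.self, hd.self, add_zero]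

theorem IsPseudoDist.le_glueDist_add (hd : IsPseudoDist d) (u v x y : X) :
    d x y ≤ glueDist d u v x y + d u v := by
  have := hd.triangle x u y
  have := hd.triangle u v y
  have := hd.triangle x v y
  have := hd.triangle v u y
  have := hd.comm u v
  have := hd.nonneg u v
  simp only [glueDist, min_add, le_min_iff]
  exact ⟨by linarith, by linarith, by linarith⟩

theorem IsPseudoDist.glue (hd : IsPseudoDist d) (u v : X) : IsPseudoDist (glueDist d u v) where
  self x := le_antisymm ((glueDist_le u v x x).trans_eq (hd.self x)) (hd.glueDist_nonneg u v x x)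
  comm x y := by
    simp only [glueDist]
    rw [hd.comm y x, hd.comm y u, hd.comm v x, hd.comm y v, hd.comm u x, min_comm (d u y + _),
      add_comm (d u y), add_comm (d v y)]
  triangle x y z := by
    -- each of the nine routes `x → y → z` dominates one of the three routes `x → z`
    have h₁ : glueDist d u v x z ≤ d x z := min_le_left _ _
    have h₂ : glueDist d u v x z ≤ d x u + d v z := (min_le_right _ _).trans (min_le_left _ _)
    have h₃ : glueDist d u v x z ≤ d x v + d u z := (min_le_right _ _).trans (min_le_right _ _)
    have := hd.nonneg u y; have := hd.nonneg v y; have := hd.nonneg y u; have := hd.nonneg y v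
    have := hd.triangle x y z; have := hd.triangle x y u; have := hd.triangle x y v
    have := hd.triangle u y z; have := hd.triangle v y z
    have := hd.triangle x u z; have := hd.triangle x v z
    simp only [glueDist, min_add, add_min, le_min_iff] at h₁ h₂ h₃ ⊢
    refine ⟨⟨?_, ?_, ?_⟩, ⟨?_, ?_, ?_⟩, ⟨?_, ?_, ?_⟩⟩ <;> linarith

theorem relPow_mono {N N' : Set (X × X)} (h : N ⊆ N') (m : ℕ) : relPow N m ⊆ relPow N' m :=
  fun _ ⟨c, h₀, hm, hc⟩ => ⟨c, h₀, hm, fun i hi => h (hc i hi)⟩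

theorem IsPseudoDist.relPow_subset (hd : IsPseudoDist d) (δ : ℝ) (m : ℕ) :
    relPow {p | d p.1 p.2 ≤ δ} m ⊆ {p | d p.1 p.2 ≤ m * δ} := by
  rintro ⟨x, w⟩ ⟨c, rfl, rfl, hc⟩
  induction m with
  | zero => simp [hd.self]
  | succ m ih =>
    calc d (c 0) (c (m + 1)) ≤ d (c 0) (c m) + d (c m) (c (m + 1)) := hd.triangle _ _ _
      _ ≤ m * δ + δ := add_le_add (ih fun i hi => hc i (by omega)) (hc m (by omega))
      _ = (m + 1 : ℕ) * δ := by push_cast; ring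

def pairsRel {ι : Type*} (a b : ι → X) (T : Finset ι) : Set (X × X) :=
  ⋃ i ∈ T, {(a i, b i), (b i, a i)}

variable {ι : Type*} (a b : ι → X)

@[simp]
theorem pairsRel_empty : pairsRel a b ∅ = ∅ := by simp [pairsRel]

theorem pairsRel_insert [DecidableEq ι] (k : ι) (T : Finset ι) :
    pairsRel a b (insert k T) = {(a k, b k), (b k, a k)} ∪ pairsRel a b T := by
  simp [pairsRel]

theorem mk_mem_pairsRel {T : Finset ι} {i : ι} (hi : i ∈ T) : (a i, b i) ∈ pairsRel a b T :=
  Set.mem_biUnion hi (Set.mem_insert _ _)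

theorem swap_mem_pairsRel {T : Finset ι} {p : X × X} (hp : p ∈ pairsRel a b T) :
    p.swap ∈ pairsRel a b T := by
  simp only [pairsRel, Set.mem_iUnion, Set.mem_insert_iff, Set.mem_singleton_iff] at hp ⊢
  obtain ⟨i, hi, rfl | rfl⟩ := hp
  exacts [⟨i, hi, Or.inr rfl⟩, ⟨i, hi, Or.inl rfl⟩]

theorem finite_pairsRel (T : Finset ι) : (pairsRel a b T).Finite :=
  T.finite_toSet.biUnion fun _ _ => Set.toFinite _

theorem IsPseudoDist.relPow_union_pairsRel_subset (hd : IsPseudoDist d) {δ : ℝ} (hδ : 0 ≤ δ)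
    (T : Finset ι) (m : ℕ) :
    relPow ({p | d p.1 p.2 ≤ δ} ∪ pairsRel a b T) m ⊆
      {p | d p.1 p.2 ≤ m * δ + ∑ i ∈ T, d (a i) (b i)} := by
  classical
  induction T using Finset.induction_on generalizing d with
  | empty => simpa using hd.relPow_subset δ m
  | insert k T hk ih =>
    set d' := glueDist d (a k) (b k)
    have hjump : (a k, b k) ∈ {p : X × X | d' p.1 p.2 ≤ δ} :=
      (hd.glueDist_left_right _ _).trans_le hδ
    have hsub : {p : X × X | d p.1 p.2 ≤ δ} ∪ pairsRel a b (insert k T) ⊆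
        {p | d' p.1 p.2 ≤ δ} ∪ pairsRel a b T := by
      rw [pairsRel_insert, ← Set.union_assoc]
      refine Set.union_subset_union_left _ (Set.union_subset ?_ ?_)
      · exact fun p hp => (glueDist_le _ _ _ _).trans hp
      · rintro p (rfl | rfl)
        exacts [hjump, ((hd.glue _ _).comm _ _).trans_le hjump]
    intro p hp
    calc d p.1 p.2 ≤ d' p.1 p.2 + d (a k) (b k) := hd.le_glueDist_add _ _ _ _
      _ ≤ m * δ + ∑ i ∈ T, d' (a i) (b i) + d (a k) (b k) :=
        add_le_add_left (ih (hd.glue _ _) (relPow_mono hsub m hp)) _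
      _ ≤ m * δ + ∑ i ∈ T, d (a i) (b i) + d (a k) (b k) := by
        gcongr with i; exact glueDist_le _ _ _ _
      _ = m * δ + ∑ i ∈ insert k T, d (a i) (b i) := by rw [Finset.sum_insert hk]; ring

end

theorem strong_chains_imp_w_rel_general {X : Type*} [t : TopologicalSpace X] [CompactSpace X]
    (f : X → X) (y z : X)
    (m' : MetricSpace X) (hm' : m'.toUniformSpace.toTopologicalSpace = t)
    (h : ∀ ε : ℝ, 0 < ε → IsStrongChainD (@dist X m'.toDist) f ε y z) :
    ∀ D : Set (X × X), IsClosed D → D ∈ nhdsSet (Set.diagonal X) →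
      ∃ N : Set (X × X), IsClosed N ∧ N ∈ nhdsSet (Set.diagonal X) ∧
        (∀ a b : X, (a, b) ∈ N → (b, a) ∈ N) ∧
        ∃ n : ℕ, 0 < n ∧ relPow N (3 ^ n) ⊆ D ∧ IsNChain f N n y z := by
  subst hm'
  intro D _ hD
  rw [nhdsSet_diagonal_eq_uniformity] at hD ⊢
  obtain ⟨ε, hε, hεD⟩ := Metric.mem_uniformity_dist.mp hD
  obtain ⟨n, hn, c, rfl, rfl, hsum⟩ := h (ε / 3) (by positivity)
  have h3δ : ((3 ^ n : ℕ) : ℝ) * (ε / 3 / 3 ^ n) = ε / 3 := by push_cast; field_simp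
  set δ := ε / 3 / 3 ^ n
  have hδ : 0 < δ := by positivity
  set jumps := pairsRel (fun i ↦ f (c i)) (fun i ↦ c (i + 1)) (Finset.range n)
  refine ⟨{p | dist p.1 p.2 ≤ δ} ∪ jumps, ?_, ?_, ?_, n, hn, ?_, ?_⟩
  · exact (isClosed_le continuous_dist continuous_const).union (finite_pairsRel _ _ _).isClosed
  · exact Filter.mem_of_superset (Metric.dist_mem_uniformity hδ)
      fun p (hp : dist p.1 p.2 < δ) => Or.inl hp.le
  · rintro u v (huv | huv)
    · exact Or.inl (by rwa [Set.mem_ofPred_eq, dist_comm])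
    · exact Or.inr (swap_mem_pairsRel _ _ huv)
  · intro p hp
    have hp := isPseudoDist_dist.relPow_union_pairsRel_subset _ _ hδ.le _ _ hp
    simp only [Set.mem_ofPred_eq, h3δ] at hp
    exact hεD (by linarith)
  · exact ⟨c, rfl, rfl, fun i hi => Or.inr (mk_mem_pairsRel _ _ (Finset.mem_range.mpr hi))⟩

/-- If for some compatible metric d' there are strong (ε,f,d')-chains from y to z for
all ε > 0, then for every closed neighborhood D of the diagonal there exist a closed
symmetric neighborhood N of the diagonal and n > 0 with N^{3^n} ⊆ D and an
(N,f)-chain of length n from y to z. -/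
theorem strong_chains_imp_w_rel {X : Type*} [t : TopologicalSpace X] [CompactSpace X]
    (f : X → X) (hf : Continuous f) (y z : X)
    (m' : MetricSpace X) (hm' : m'.toUniformSpace.toTopologicalSpace = t)
    (h : ∀ ε : ℝ, 0 < ε → IsStrongChainD (@dist X m'.toDist) f ε y z) :
    ∀ D : Set (X × X), IsClosed D → D ∈ nhdsSet (Set.diagonal X) →
      ∃ N : Set (X × X), IsClosed N ∧ N ∈ nhdsSet (Set.diagonal X) ∧
        (∀ a b : X, (a, b) ∈ N → (b, a) ∈ N) ∧
        ∃ n : ℕ, 0 < n ∧ relPow N (3 ^ n) ⊆ D ∧ IsNChain f N n y z :=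
  strong_chains_imp_w_rel_general (t := t) f y z m' hm' h
end

section
/- The Mañé relation W is closed in X × X, where (y,z) ∈ W iff for every closed neighborhood D of the diagonal there exist a closed symmetric neighborhood N of the diagonal and n > 0 with N^{3^n} ⊆ D and an (N,f)-chain of length n from y to z. Consequently the Mañé set {x : (x,x) ∈ W} is closed. -/
/-- The Mañé relation W. -/
def WRel {X : Type*} [TopologicalSpace X] (f : X → X) : Set (X × X) :=
  {p | ∀ D : Set (X × X), IsClosed D → D ∈ nhdsSet (Set.diagonal X) →
    ∃ N : Set (X × X), IsClosed N ∧ N ∈ nhdsSet (Set.diagonal X) ∧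
      (∀ a b : X, (a, b) ∈ N → (b, a) ∈ N) ∧
      ∃ n : ℕ, 0 < n ∧ relPow N (3 ^ n) ⊆ D ∧ IsNChain f N n p.1 p.2}

open Set Metric

namespace ManeAux

lemma relPow_refl {X : Type*} (N : Set (X × X)) (x : X) : (x, x) ∈ relPow N 0 :=
  ⟨fun _ => x, rfl, rfl, fun i hi => absurd hi (Nat.not_lt_zero i)⟩

lemma relPow_snoc {X : Type*} {N : Set (X × X)} {x y z : X} {j : ℕ}
    (h : (x, y) ∈ relPow N j) (h2 : (y, z) ∈ N) : (x, z) ∈ relPow N (j + 1) := by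
  obtain ⟨c, hc0, hcj, hsteps⟩ := h
  refine ⟨fun i => if i ≤ j then c i else z, by simp [hc0], by simp, ?_⟩
  intro i hi
  rcases Nat.lt_or_ge i j with h' | h'
  · simp only [if_pos h'.le, if_pos (Nat.succ_le_of_lt h')]
    exact hsteps i h'
  · have hij : i = j := by omega
    subst hij
    simp only [if_pos le_rfl, if_neg (by omega : ¬ i + 1 ≤ i)]
    rw [show c i = y from hcj]
    exact h2

lemma relPow_one {X : Type*} {N : Set (X × X)} {x y : X} (h : (x, y) ∈ N) :
    (x, y) ∈ relPow N 1 := by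
  simpa using relPow_snoc (relPow_refl N x) h

lemma relPow_mono {X : Type*} {N : Set (X × X)} (hd : ∀ x : X, (x, x) ∈ N)
    {k m : ℕ} (hkm : k ≤ m) {p : X × X} (hp : p ∈ relPow N k) : p ∈ relPow N m := by
  obtain ⟨c, hc0, hck, hsteps⟩ := hp
  refine ⟨fun i => c (min i k), by simpa, by simp [Nat.min_eq_right hkm, hck], ?_⟩
  intro i hi
  show (c (min i k), c (min (i + 1) k)) ∈ N
  rcases Nat.lt_or_ge i k with h | h
  · rw [min_eq_left h.le, min_eq_left h]
    exact hsteps i h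
  · rw [min_eq_right h, min_eq_right (h.trans (Nat.le_succ i))]
    exact hd _

lemma exists_eps_of_mem_nhdsSet {X : Type*} [MetricSpace X] [CompactSpace X]
    {D : Set (X × X)} (hD : D ∈ nhdsSet (Set.diagonal X)) :
    ∃ ε > 0, ∀ a b : X, dist a b ≤ ε → (a, b) ∈ D := by
  obtain ⟨U, hUopen, hdU, hUD⟩ := mem_nhdsSet_iff_exists.mp hD
  obtain ⟨δ, hδ, hthick⟩ := isCompact_diagonal.exists_thickening_subset_open hUopen hdU
  refine ⟨δ / 2, by positivity, fun a b hab => ?_⟩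
  apply hUD
  apply hthick
  rw [mem_thickening_iff]
  refine ⟨(a, a), mem_diagonal a, ?_⟩
  rw [Prod.dist_eq]
  simp only [dist_self]
  have : dist b a ≤ δ / 2 := by rw [dist_comm]; exact hab
  rw [max_eq_right dist_nonneg]
  linarith

end ManeAux

namespace ManeAux

variable {X : Type*} [MetricSpace X]

/-- Invariant for chains in `N ∪ S` where `S` consists of two symmetric jump pairs. -/
def Inv (N : Set (X × X)) (ε : ℝ) (c : ℕ → X) (u1 v1 u2 v2 : X) (i : ℕ) : Prop :=
  ((c 0, c i) ∈ relPow N i) ∨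
  ∃ j, j ≤ i ∧ (c j, c i) ∈ relPow N (i - j) ∧
    (((c j = u1 ∨ c j = v1) ∧ dist (c 0) u1 ≤ 4 * ε ∧ dist (c 0) v1 ≤ 4 * ε) ∨
     ((c j = u2 ∨ c j = v2) ∧ dist (c 0) u2 ≤ 4 * ε ∧ dist (c 0) v2 ≤ 4 * ε) ∨
     ((c j = u1 ∨ c j = v1 ∨ c j = u2 ∨ c j = v2) ∧
       dist (c 0) u1 ≤ 8 * ε ∧ dist (c 0) v1 ≤ 8 * ε ∧
       dist (c 0) u2 ≤ 8 * ε ∧ dist (c 0) v2 ≤ 8 * ε))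

lemma inv_swap_pairs {N : Set (X × X)} {ε : ℝ} {c : ℕ → X} {u1 v1 u2 v2 : X} {i : ℕ}
    (h : Inv N ε c u1 v1 u2 v2 i) : Inv N ε c u2 v2 u1 v1 i := by
  rcases h with h0 | ⟨j, hj, hr, hs⟩
  · exact Or.inl h0
  · exact Or.inr ⟨j, hj, hr, by tauto⟩

lemma inv_swap_fst {N : Set (X × X)} {ε : ℝ} {c : ℕ → X} {u1 v1 u2 v2 : X} {i : ℕ}
    (h : Inv N ε c u1 v1 u2 v2 i) : Inv N ε c v1 u1 u2 v2 i := by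
  rcases h with h0 | ⟨j, hj, hr, hs⟩
  · exact Or.inl h0
  · exact Or.inr ⟨j, hj, hr, by tauto⟩

/-- Performing a jump `(u1, v1)` at step `i + 1` preserves the invariant. -/
lemma inv_jump {N : Set (X × X)} {ε : ℝ} {c : ℕ → X} {u1 v1 u2 v2 : X} {i m : ℕ}
    (hε : 0 < ε)
    (hrun : ∀ k ≤ m, ∀ r ∈ relPow N k, dist r.1 r.2 ≤ ε)
    (h1 : dist u1 v1 ≤ 3 * ε)
    (him : i + 1 ≤ m)
    (hinv : Inv N ε c u1 v1 u2 v2 i)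
    (hsrc : c i = u1) (htgt : c (i + 1) = v1) :
    Inv N ε c u1 v1 u2 v2 (i + 1) := by
  have hrefl : (c (i + 1), c (i + 1)) ∈ relPow N ((i + 1) - (i + 1)) := by
    simpa using relPow_refl N (c (i + 1))
  rcases hinv with h0 | ⟨j, hj, hrunj, hstate⟩
  · -- was a pure run from the start
    have hd : dist (c 0) (c i) ≤ ε := hrun i (by omega) _ h0
    have hdu1 : dist (c 0) u1 ≤ ε := by rwa [← hsrc]
    have hdv1 : dist (c 0) v1 ≤ 4 * ε := by
      have := dist_triangle (c 0) u1 v1; linarith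
    exact Or.inr ⟨i + 1, le_rfl, hrefl, Or.inl ⟨Or.inr htgt, by linarith, hdv1⟩⟩
  · have hdj : dist (c j) (c i) ≤ ε := hrun (i - j) (by omega) _ hrunj
    rcases hstate with ⟨hmem, hb1, hb2⟩ | ⟨hmem, hb1, hb2⟩ | ⟨hmem, hb1, hb2, hb3, hb4⟩
    · -- state C1 : stay in C1
      exact Or.inr ⟨i + 1, le_rfl, hrefl, Or.inl ⟨Or.inr htgt, hb1, hb2⟩⟩
    · -- state C2 : move to C3
      have hd0j : dist (c 0) (c j) ≤ 4 * ε := by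
        rcases hmem with h | h <;> rw [h] <;> assumption
      have hd0i : dist (c 0) (c i) ≤ 5 * ε := by
        have := dist_triangle (c 0) (c j) (c i); linarith
      have hdu1 : dist (c 0) u1 ≤ 8 * ε := by rw [← hsrc]; linarith
      have hdv1 : dist (c 0) v1 ≤ 8 * ε := by
        have ht := dist_triangle (c 0) u1 v1
        have hu : dist (c 0) u1 ≤ 5 * ε := by rw [← hsrc]; exact hd0i
        linarith
      exact Or.inr ⟨i + 1, le_rfl, hrefl,
        Or.inr (Or.inr ⟨Or.inr (Or.inl htgt), hdu1, hdv1, by linarith, by linarith⟩)⟩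
    · -- state C3 : stay in C3
      exact Or.inr ⟨i + 1, le_rfl, hrefl,
        Or.inr (Or.inr ⟨Or.inr (Or.inl htgt), hb1, hb2, hb3, hb4⟩)⟩

/-- A pure `N`-step at step `i + 1` preserves the invariant. -/
lemma inv_step {N : Set (X × X)} {ε : ℝ} {c : ℕ → X} {u1 v1 u2 v2 : X} {i : ℕ}
    (hstep : (c i, c (i + 1)) ∈ N)
    (hinv : Inv N ε c u1 v1 u2 v2 i) :
    Inv N ε c u1 v1 u2 v2 (i + 1) := by
  rcases hinv with h0 | ⟨j, hj, hrunj, hstate⟩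
  · exact Or.inl (relPow_snoc h0 hstep)
  · refine Or.inr ⟨j, hj.trans (Nat.le_succ i), ?_, hstate⟩
    have he : (i + 1) - j = (i - j) + 1 := by omega
    rw [he]
    exact relPow_snoc hrunj hstep

/-- The main composition estimate: any chain in `N ∪ S` of length at most `m`
has endpoints at distance at most `9ε`. -/
lemma jump_lemma {N : Set (X × X)} {ε : ℝ} (hε : 0 < ε) {m : ℕ}
    (hrun : ∀ k ≤ m, ∀ r ∈ relPow N k, dist r.1 r.2 ≤ ε)
    (u1 v1 u2 v2 : X) (h1 : dist u1 v1 ≤ 3 * ε) (h2 : dist u2 v2 ≤ 3 * ε)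
    {r : X × X}
    (hr : r ∈ relPow (N ∪ ({(u1, v1), (v1, u1), (u2, v2), (v2, u2)} : Set (X × X))) m) :
    dist r.1 r.2 ≤ 9 * ε := by
  obtain ⟨c, hc0, hcm, hsteps⟩ := hr
  have hrun' : ∀ k ≤ m, ∀ rr ∈ relPow N k, dist (Prod.fst rr) rr.2 ≤ ε := hrun
  have key : ∀ i ≤ m, Inv N ε c u1 v1 u2 v2 i := by
    intro i
    induction i with
    | zero => exact fun _ => Or.inl (relPow_refl N (c 0))
    | succ i ih =>
      intro him
      have hinv := ih (by omega)
      have hstep := hsteps i (by omega)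
      rcases hstep with hN | hS
      · exact inv_step hN hinv
      · simp only [Set.mem_insert_iff, Set.mem_singleton_iff, Prod.mk.injEq] at hS
        rcases hS with ⟨ha, hb⟩ | ⟨ha, hb⟩ | ⟨ha, hb⟩ | ⟨ha, hb⟩
        · exact inv_jump hε hrun h1 him hinv ha hb
        · exact inv_swap_fst
            (inv_jump hε hrun (by rwa [dist_comm]) him (inv_swap_fst hinv) ha hb)
        · exact inv_swap_pairs
            (inv_jump hε hrun h2 him (inv_swap_pairs hinv) ha hb)
        · exact inv_swap_pairs (inv_swap_fst
            (inv_jump hε hrun (by rwa [dist_comm]) him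
              (inv_swap_fst (inv_swap_pairs hinv)) ha hb))
  have hfin := key m le_rfl
  have hgoal : dist (c 0) (c m) ≤ 9 * ε := by
    rcases hfin with h0 | ⟨j, hj, hrunj, hstate⟩
    · have := hrun m le_rfl _ h0; linarith
    · have hdj : dist (c j) (c m) ≤ ε := hrun (m - j) (by omega) _ hrunj
      have hd0j : dist (c 0) (c j) ≤ 8 * ε := by
        rcases hstate with ⟨hmem, hb1, hb2⟩ | ⟨hmem, hb1, hb2⟩ | ⟨hmem, hb1, hb2, hb3, hb4⟩
        · rcases hmem with h | h <;> rw [h] <;> linarith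
        · rcases hmem with h | h <;> rw [h] <;> linarith
        · rcases hmem with h | h | h | h <;> rw [h] <;> linarith
      have := dist_triangle (c 0) (c j) (c m)
      linarith
  rw [← hc0, ← hcm]
  exact hgoal

end ManeAux

namespace ManeAux

/-- Assemble a witness for membership in the Mañé relation from a relation `N`
enlarged by two symmetric jump pairs. -/
lemma witness_assembly {X : Type*} [MetricSpace X] {f : X → X} {D : Set (X × X)}
    {N : Set (X × X)} {ε ε₀ : ℝ} (hε : 0 < ε) (hε9 : 9 * ε ≤ ε₀)
    (hD : ∀ a b : X, dist a b ≤ ε₀ → (a, b) ∈ D)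
    (hNclosed : IsClosed N) (hNnhds : N ∈ nhdsSet (Set.diagonal X))
    (hNsym : ∀ a b : X, (a, b) ∈ N → (b, a) ∈ N)
    {n : ℕ} (hn : 0 < n)
    (hrun : ∀ k ≤ 3 ^ n, ∀ r ∈ relPow N k, dist r.1 r.2 ≤ ε)
    (u1 v1 u2 v2 : X) (h1 : dist u1 v1 ≤ 3 * ε) (h2 : dist u2 v2 ≤ 3 * ε)
    (y z : X)
    (hchain : IsNChain f (N ∪ ({(u1, v1), (v1, u1), (u2, v2), (v2, u2)} : Set (X × X))) n y z) :
    ∃ N' : Set (X × X), IsClosed N' ∧ N' ∈ nhdsSet (Set.diagonal X) ∧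
      (∀ a b : X, (a, b) ∈ N' → (b, a) ∈ N') ∧
      ∃ n' : ℕ, 0 < n' ∧ relPow N' (3 ^ n') ⊆ D ∧ IsNChain f N' n' y z := by
  refine ⟨N ∪ ({(u1, v1), (v1, u1), (u2, v2), (v2, u2)} : Set (X × X)),
    hNclosed.union (Set.toFinite _).isClosed,
    Filter.mem_of_superset hNnhds Set.subset_union_left, ?_, n, hn, ?_, hchain⟩
  · intro a b hab
    rcases hab with h | h
    · exact Or.inl (hNsym a b h)
    · right
      simp only [Set.mem_insert_iff, Set.mem_singleton_iff, Prod.mk.injEq] at h ⊢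
      tauto
  · intro r hr
    have hd := jump_lemma hε hrun u1 v1 u2 v2 h1 h2 hr
    have hd' : dist r.1 r.2 ≤ ε₀ := by linarith
    have := hD r.1 r.2 hd'
    simpa using this

end ManeAux

/-- The Mañé relation is closed; consequently the Mañé set is closed. -/
theorem wrel_isClosed {X : Type*} [MetricSpace X] [CompactSpace X]
    (f : X → X) (hf : Continuous f) :
    IsClosed (WRel f) ∧ IsClosed {x : X | (x, x) ∈ WRel f} := by
  have hWc : IsClosed (WRel f) := by
    refine isClosed_of_closure_subset ?_
    rintro ⟨y, z⟩ hp D hDclosed hDnhds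
    obtain ⟨ε₀, hε₀, hD⟩ := ManeAux.exists_eps_of_mem_nhdsSet hDnhds
    have hε : 0 < ε₀ / 9 := by positivity
    set ε : ℝ := ε₀ / 9 with hεdef
    obtain ⟨δ, hδpos, hδ⟩ := Metric.uniformContinuous_iff.mp
      (CompactSpace.uniformContinuous_of_continuous hf) ε hε
    obtain ⟨q, hqW, hq⟩ := Metric.mem_closure_iff.mp hp (min δ ε) (lt_min hδpos hε)
    have hq1δ : dist y q.1 < δ := by
      have h1 : dist y q.1 ≤ dist ((y, z)) q := by
        rw [Prod.dist_eq]; exact le_max_left _ _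
      exact (lt_of_le_of_lt h1 hq).trans_le (min_le_left _ _)
    have hq2ε : dist z q.2 ≤ ε := by
      have h1 : dist z q.2 ≤ dist ((y, z)) q := by
        rw [Prod.dist_eq]; exact le_max_right _ _
      exact le_of_lt ((lt_of_le_of_lt h1 hq).trans_le (min_le_right _ _))
    have hfy : dist (f y) (f q.1) ≤ ε := le_of_lt (hδ hq1δ)
    have hD₀closed : IsClosed {r : X × X | dist r.1 r.2 ≤ ε} :=
      isClosed_le (continuous_fst.dist continuous_snd) continuous_const
    have hD₀nhds : {r : X × X | dist r.1 r.2 ≤ ε} ∈ nhdsSet (Set.diagonal X) := by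
      refine mem_nhdsSet_iff_exists.mpr ⟨{r : X × X | dist r.1 r.2 < ε},
        isOpen_lt (continuous_fst.dist continuous_snd) continuous_const, ?_,
        fun r hr => le_of_lt (show dist r.1 r.2 < ε from hr)⟩
      intro r hr
      have hr12 : r.1 = r.2 := hr
      simp only [Set.mem_setOf_eq, hr12, dist_self]
      exact hε
    obtain ⟨N, hNclosed, hNnhds, hNsym, n, hn, hNpow, c, hc0, hcn, hchain⟩ :=
      hqW _ hD₀closed hD₀nhds
    have hdiagN : ∀ x : X, (x, x) ∈ N := fun x =>
      subset_of_mem_nhdsSet hNnhds (Set.mem_diagonal x)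
    have hrun : ∀ k ≤ 3 ^ n, ∀ r ∈ relPow N k, dist r.1 r.2 ≤ ε := fun k hk r hr =>
      hNpow (ManeAux.relPow_mono hdiagN hk hr)
    have hone : (1 : ℕ) ≤ 3 ^ n := Nat.one_le_pow n 3 (by norm_num)
    have hNstep : ∀ i < n, dist (f (c i)) (c (i + 1)) ≤ ε := fun i hi =>
      hrun 1 hone _ (ManeAux.relPow_one (hchain i hi))
    have hε9 : 9 * ε ≤ ε₀ := by rw [hεdef]; linarith
    by_cases hn1 : n = 1
    · -- degenerate case: chain of length one, single jump pair (f y, z)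
      subst hn1
      have hA : dist (f q.1) q.2 ≤ ε := by
        have h0 := hNstep 0 (by omega)
        rwa [hc0, hcn] at h0
      have hfyz : dist (f y) z ≤ 3 * ε := by
        have t1 := dist_triangle (f y) (f q.1) z
        have t2 := dist_triangle (f q.1) q.2 z
        have hcomm : dist q.2 z = dist z q.2 := dist_comm _ _
        linarith
      refine ManeAux.witness_assembly hε hε9 hD hNclosed hNnhds hNsym hn hrun
        (f y) z (f y) z hfyz hfyz y z ?_
      refine ⟨fun i => if i = 0 then y else z, by simp, by simp, ?_⟩
      intro i hi
      have hi0 : i = 0 := by omega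
      subst hi0
      simp only [if_pos rfl, if_neg (Nat.one_ne_zero)]
      exact Or.inr (Set.mem_insert _ _)
    · -- main case: n ≥ 2, jump pairs (f y, c 1) and (f (c (n-1)), z)
      have hn2 : 2 ≤ n := by omega
      have h1 : dist (f y) (c 1) ≤ 3 * ε := by
        have h0 := hNstep 0 (by omega)
        rw [hc0] at h0
        have t := dist_triangle (f y) (f q.1) (c 1)
        linarith
      have h2 : dist (f (c (n - 1))) z ≤ 3 * ε := by
        have h0 := hNstep (n - 1) (by omega)
        rw [show n - 1 + 1 = n by omega, hcn] at h0
        have t := dist_triangle (f (c (n - 1))) q.2 z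
        have hcomm : dist q.2 z = dist z q.2 := dist_comm _ _
        linarith
      refine ManeAux.witness_assembly hε hε9 hD hNclosed hNnhds hNsym hn hrun
        (f y) (c 1) (f (c (n - 1))) z h1 h2 y z ?_
      refine ⟨fun i => if i = 0 then y else if i = n then z else c i, by simp,
        by simp only [if_neg (by omega : n ≠ 0), eq_self_iff_true, if_true], ?_⟩
      intro i hi
      show (f (if i = 0 then y else if i = n then z else c i),
        if i + 1 = 0 then y else if i + 1 = n then z else c (i + 1)) ∈ _
      rcases Nat.eq_zero_or_pos i with rfl | hipos
      · simp only [if_pos rfl, if_neg (Nat.one_ne_zero), if_neg (by omega : (1 : ℕ) ≠ n)]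
        exact Or.inr (Set.mem_insert _ _)
      · have hxi : (if i = 0 then y else if i = n then z else c i) = c i := by
          rw [if_neg (by omega : i ≠ 0), if_neg (by omega : i ≠ n)]
        rw [hxi]
        by_cases hin : i + 1 = n
        · rw [if_neg (by omega : i + 1 ≠ 0), if_pos hin,
            show i = n - 1 by omega]
          refine Or.inr ?_
          simp only [Set.mem_insert_iff, Set.mem_singleton_iff, Prod.mk.injEq]
          tauto
        · rw [if_neg (by omega : i + 1 ≠ 0), if_neg hin]
          exact Or.inl (hchain i hi)
  exact ⟨hWc, hWc.preimage (continuous_id.prodMk continuous_id)⟩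
end

section
/- Define GR(f) as the set of points x such that for every sequence Σ of neighborhoods of the diagonal there is a (Σ,f)-chain from x to x. Then GR(f^k) = GR(f) for every k ≥ 1, where GR(f^k) is defined analogously using f^k. -/
/-- The generalized recurrent set, defined via Σ-chains. -/
def GR {X : Type*} [TopologicalSpace X] (g : X → X) : Set X :=
  {x | ∀ S : ℕ → Set (X × X), (∀ i, S i ∈ nhdsSet (Set.diagonal X)) →
    IsSigmaChain g S x x}

open Metric Set in
private lemma GRaux.prop_lemma {X : Type*} [MetricSpace X] {f : X → X}
    (hf : UniformContinuous f) :
    ∀ (k : ℕ) (ε : ℝ), 0 < ε → ∃ δ : ℝ, 0 < δ ∧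
      ∀ c : ℕ → X, (∀ j < k, dist (f (c j)) (c (j+1)) < δ) →
        dist (f^[k] (c 0)) (c k) < ε := by
  intro k
  induction k with
  | zero => exact fun ε hε => ⟨ε, hε, fun c _ => by simpa using hε⟩
  | succ k ih =>
    intro ε hε
    obtain ⟨η, hη, hη2⟩ := Metric.uniformContinuous_iff.mp hf (ε/2) (by linarith)
    obtain ⟨δ', hδ', hIH⟩ := ih η hη
    refine ⟨min δ' (ε/2), by positivity, fun c hc => ?_⟩
    have h1 : dist (f^[k] (c 0)) (c k) < η :=
      hIH c fun j hj => lt_of_lt_of_le (hc j (by omega)) (min_le_left _ _)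
    have h2 : dist (f (c k)) (c (k+1)) < ε/2 :=
      lt_of_lt_of_le (hc k (by omega)) (min_le_right _ _)
    calc dist (f^[k+1] (c 0)) (c (k+1))
        ≤ dist (f^[k+1] (c 0)) (f (c k)) + dist (f (c k)) (c (k+1)) := dist_triangle _ _ _
      _ < ε/2 + ε/2 := by
          rw [Function.iterate_succ_apply']
          exact add_lt_add (hη2 h1) h2
      _ = ε := by ring


open Metric Set in
private lemma GRaux.easy_dir {X : Type*} [TopologicalSpace X]
    (f : X → X) (k : ℕ) (hk : 1 ≤ k) : GR (f^[k]) ⊆ GR f := by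
  intro x hx S hS
  obtain ⟨n, hn, c, σ, hσ, hc0, hcn, hstep⟩ := hx (fun j => S (k*j + k - 1))
    (fun j => hS _)
  have hk0 : 0 < k := hk
  refine ⟨k*n, Nat.one_le_iff_ne_zero.mpr (by positivity),
    fun i => f^[i % k] (c (i / k)), fun i => k * σ (i / k) + i % k, ?_, ?_, ?_, ?_⟩
  · intro a ha b hb hab
    simp only [Set.mem_Iio] at ha hb
    simp only at hab
    have hak : a / k < n := (Nat.div_lt_iff_lt_mul hk0).mpr (by rw [Nat.mul_comm]; exact ha)
    have hbk : b / k < n := (Nat.div_lt_iff_lt_mul hk0).mpr (by rw [Nat.mul_comm]; exact hb)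
    have e1 : (k * σ (a/k) + a % k) % k = a % k := by
      rw [Nat.mul_add_mod, Nat.mod_mod_of_dvd _ dvd_rfl]
    have e2 : (k * σ (b/k) + b % k) % k = b % k := by
      rw [Nat.mul_add_mod, Nat.mod_mod_of_dvd _ dvd_rfl]
    have hmod : a % k = b % k := by rw [← e1, ← e2, hab]
    have hdiv : σ (a / k) = σ (b / k) := Nat.eq_of_mul_eq_mul_left hk0 (by omega)
    have hdd : a / k = b / k := hσ (Set.mem_Iio.mpr hak) (Set.mem_Iio.mpr hbk) hdiv
    have d1 := Nat.div_add_mod a k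
    have d2 := Nat.div_add_mod b k
    rw [hdd] at d1
    omega
  · show f^[0 % k] (c (0 / k)) = x
    simp [hc0]
  · show f^[(k*n) % k] (c ((k*n) / k)) = x
    rw [Nat.mul_mod_right, Nat.mul_div_cancel_left _ hk0]
    simpa using hcn
  · intro i hi
    show (f (f^[i % k] (c (i / k))), f^[(i+1) % k] (c ((i+1) / k))) ∈
      S (k * σ (i / k) + i % k)
    have hrk : i % k < k := Nat.mod_lt _ hk0
    have hqn : i / k < n := (Nat.div_lt_iff_lt_mul hk0).mpr (by rw [Nat.mul_comm]; exact hi)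
    have hdm := Nat.div_add_mod i k
    rcases Nat.lt_or_ge (i % k + 1) k with hcase | hcase
    · have h1 : i + 1 = k * (i/k) + (i%k + 1) := by omega
      rw [h1, Nat.mul_add_div hk0, Nat.mul_add_mod, Nat.div_eq_of_lt hcase,
        Nat.mod_eq_of_lt hcase, Nat.add_zero, Function.iterate_succ_apply']
      exact subset_of_mem_nhdsSet (hS _) rfl
    · have hms : k * (i/k + 1) = k * (i/k) + k := by
        rw [Nat.mul_add, Nat.mul_one]
      have h1 : i + 1 = k * (i/k + 1) := by omega
      have he : i % k + 1 = k := by omega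
      have hiter : f (f^[i % k] (c (i/k))) = f^[k] (c (i/k)) :=
        calc f (f^[i % k] (c (i/k))) = f^[i % k + 1] (c (i/k)) :=
              (Function.iterate_succ_apply' f _ _).symm
          _ = f^[k] (c (i/k)) := by rw [he]
      rw [h1, Nat.mul_div_cancel_left _ hk0, Nat.mul_mod_right,
        Function.iterate_zero_apply, hiter,
        (show k * σ (i/k) + i % k = k * σ (i/k) + k - 1 from by omega)]
      exact hstep _ hqn

open Metric Set in
private lemma GRaux.hard_dir {X : Type*} [MetricSpace X] [CompactSpace X]
    (f : X → X) (hf : Continuous f) (k : ℕ) (hk : 1 ≤ k) : GR f ⊆ GR (f^[k]) := by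
  intro x hx S' hS'
  have hk0 : 0 < k := hk
  have hfu : UniformContinuous f := CompactSpace.uniformContinuous_of_continuous hf
  have hSu : ∀ m, S' m ∈ uniformity X := fun m => by
    rw [← nhdsSet_diagonal_eq_uniformity]; exact hS' m
  choose ε hε hεS using fun m => Metric.mem_uniformity_dist.mp (hSu m)
  choose P hP hPp using fun m => GRaux.prop_lemma hfu k (ε m) (hε m)
  set δ' : ℕ → ℝ := fun t => (Finset.range (t+1)).inf' (by simp) P with hδ'
  have hδ'pos : ∀ t, 0 < δ' t := fun t =>
    (Finset.lt_inf'_iff _).mpr fun i _ => hP i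
  have hδ'le : ∀ s t : ℕ, s ≤ t → δ' t ≤ P s := fun s t h =>
    Finset.inf'_le _ (Finset.mem_range.mpr (by omega))
  obtain ⟨n, hn, c, σ, hσ, hc0, hcn, hstep⟩ := hx
    (fun j => {p : X × X | dist p.1 p.2 < δ' (k * j + k - 1)})
    (fun j => by rw [nhdsSet_diagonal_eq_uniformity]
                 exact Metric.dist_mem_uniformity (hδ'pos _))
  have hn0 : 0 < n := hn
  have hstep' : ∀ i < n, dist (f (c i)) (c (i+1)) < δ' (k * σ i + k - 1) :=
    fun i h => hstep i h
  have hkne : (Finset.range k).Nonempty := ⟨0, Finset.mem_range.mpr hk0⟩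
  set v : ℕ → ℕ := fun b => (Finset.range k).inf' hkne (fun r => σ ((k * b + r) % n)) with hv
  have hvle : ∀ b, ∀ j < k, v b ≤ σ ((k * b + j) % n) := fun b j hj =>
    Finset.inf'_le _ (Finset.mem_range.mpr hj)
  have hvatt : ∀ b, ∃ r, r < k ∧ σ ((k * b + r) % n) = v b := fun b => by
    obtain ⟨r, hr, hre⟩ := Finset.exists_mem_eq_inf' hkne (fun r => σ ((k * b + r) % n))
    exact ⟨r, Finset.mem_range.mp hr, hre.symm⟩
  have hclass : ∀ b < n, ((Finset.range n).filter (fun b' => v b' = v b)).card ≤ k := by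
    intro b hb
    obtain ⟨r0, hr0, hre0⟩ := hvatt b
    have hresn : (k * b + r0) % n < n := Nat.mod_lt _ hn0
    have hatt : ∀ b', ∃ r', (b' < n → v b' = v b →
        r' < k ∧ (k * b' + r') % n = (k * b + r0) % n) := by
      intro b'
      by_cases h : b' < n ∧ v b' = v b
      · obtain ⟨r', hr', hre'⟩ := hvatt b'
        refine ⟨r', fun _ _ => ⟨hr', ?_⟩⟩
        have h1 : (k * b' + r') % n < n := Nat.mod_lt _ hn0
        have h2 : σ ((k * b' + r') % n) = σ ((k * b + r0) % n) := by
          rw [hre', h.2, ← hre0]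
        exact hσ (Set.mem_Iio.mpr h1) (Set.mem_Iio.mpr hresn) h2
      · exact ⟨0, fun h1 h2 => absurd ⟨h1, h2⟩ h⟩
    choose r' hr' using hatt
    have hcard := Finset.card_le_card_of_injOn (fun b' => (k * b' + r' b') / n)
      (s := (Finset.range n).filter (fun b' => v b' = v b)) (t := Finset.range k)
      ?_ ?_
    · simpa using hcard
    · intro b' hb'
      obtain ⟨hb'1, hb'2⟩ := Finset.mem_filter.mp hb'
      have hb'n : b' < n := Finset.mem_range.mp hb'1
      obtain ⟨hrk', _⟩ := hr' b' hb'n hb'2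
      have hmu : k * (b' + 1) = k * b' + k := by rw [Nat.mul_add, Nat.mul_one]
      have hle : k * (b' + 1) ≤ k * n := Nat.mul_le_mul_left k (by omega)
      exact Finset.mem_range.mpr ((Nat.div_lt_iff_lt_mul hn0).mpr (by omega))
    · intro b1 hb1 b2 hb2 heq
      simp only [Finset.coe_filter, Set.mem_setOf_eq, Finset.mem_range] at hb1 hb2
      obtain ⟨hrk1, hm1⟩ := hr' b1 hb1.1 hb1.2
      obtain ⟨hrk2, hm2⟩ := hr' b2 hb2.1 hb2.2
      simp only at heq
      have hd1 := Nat.div_add_mod (k * b1 + r' b1) n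
      have hd2 := Nat.div_add_mod (k * b2 + r' b2) n
      rw [hm1] at hd1
      rw [hm2] at hd2
      have heqfull : k * b1 + r' b1 = k * b2 + r' b2 := by
        rw [← hd1, ← hd2, heq]
      have e1 : (k * b1 + r' b1) / k = b1 := by
        rw [Nat.mul_add_div hk0, Nat.div_eq_of_lt hrk1, Nat.add_zero]
      have e2 : (k * b2 + r' b2) / k = b2 := by
        rw [Nat.mul_add_div hk0, Nat.div_eq_of_lt hrk2, Nat.add_zero]
      rw [← e1, ← e2, heqfull]
  set rank : ℕ → ℕ := fun b => ((Finset.range b).filter (fun b' => v b' = v b)).card with hrank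
  have hrlt : ∀ b < n, rank b < k := by
    intro b hb
    have hni : b ∉ (Finset.range b).filter (fun b' => v b' = v b) := by
      intro h
      exact absurd (Finset.mem_range.mp (Finset.mem_filter.mp h).1) (lt_irrefl b)
    have hsub : insert b ((Finset.range b).filter (fun b' => v b' = v b)) ⊆
        (Finset.range n).filter (fun b' => v b' = v b) := by
      intro y hy
      rcases Finset.mem_insert.mp hy with rfl | hy
      · exact Finset.mem_filter.mpr ⟨Finset.mem_range.mpr hb, rfl⟩
      · obtain ⟨hy1, hy2⟩ := Finset.mem_filter.mp hy
        have := Finset.mem_range.mp hy1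
        exact Finset.mem_filter.mpr ⟨Finset.mem_range.mpr (by omega), hy2⟩
    have h1 := Finset.card_le_card hsub
    rw [Finset.card_insert_of_notMem hni] at h1
    have h2 := hclass b hb
    simp only [hrank]
    omega
  have hrmono : ∀ b1 b2, b1 < b2 → v b1 = v b2 → rank b1 < rank b2 := by
    intro b1 b2 h hvv
    have hni : b1 ∉ (Finset.range b1).filter (fun b' => v b' = v b1) := by
      intro h'
      exact absurd (Finset.mem_range.mp (Finset.mem_filter.mp h').1) (lt_irrefl b1)
    have hsub : insert b1 ((Finset.range b1).filter (fun b' => v b' = v b1)) ⊆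
        (Finset.range b2).filter (fun b' => v b' = v b2) := by
      intro y hy
      rcases Finset.mem_insert.mp hy with rfl | hy
      · exact Finset.mem_filter.mpr ⟨Finset.mem_range.mpr h, hvv⟩
      · obtain ⟨hy1, hy2⟩ := Finset.mem_filter.mp hy
        have := Finset.mem_range.mp hy1
        exact Finset.mem_filter.mpr ⟨Finset.mem_range.mpr (by omega), by rw [hy2, hvv]⟩
    have h1 := Finset.card_le_card hsub
    rw [Finset.card_insert_of_notMem hni] at h1
    simp only [hrank]
    omega
  set m : ℕ → ℕ := fun b => k * v b + rank b with hm
  have hminj : Set.InjOn m (Set.Iio n) := by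
    intro b1 hb1 b2 hb2 heq
    simp only [Set.mem_Iio] at hb1 hb2
    simp only [hm] at heq
    have h1 : rank b1 < k := hrlt b1 hb1
    have h2 : rank b2 < k := hrlt b2 hb2
    have hvv : v b1 = v b2 := by
      have e1 : (k * v b1 + rank b1) / k = v b1 := by
        rw [Nat.mul_add_div hk0, Nat.div_eq_of_lt h1, Nat.add_zero]
      have e2 : (k * v b2 + rank b2) / k = v b2 := by
        rw [Nat.mul_add_div hk0, Nat.div_eq_of_lt h2, Nat.add_zero]
      rw [← e1, ← e2, heq]
    have hvk : k * v b1 = k * v b2 := by rw [hvv]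
    rcases lt_trichotomy b1 b2 with h | h | h
    · have := hrmono b1 b2 h hvv
      omega
    · exact h
    · have := hrmono b2 b1 h hvv.symm
      omega
  refine ⟨n, hn, fun b => c ((k * b) % n), m, hminj, ?_, ?_, ?_⟩
  · show c ((k * 0) % n) = x
    simpa using hc0
  · show c ((k * n) % n) = x
    rw [Nat.mul_mod_left]
    exact hc0
  · intro b hb
    show (f^[k] (c ((k * b) % n)), c ((k * (b + 1)) % n)) ∈ S' (m b)
    have hsteps : ∀ j < k, dist (f (c ((k * b + j) % n))) (c ((k * b + j + 1) % n)) < P (m b) := by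
      intro j hj
      have hres : (k * b + j) % n < n := Nat.mod_lt _ hn0
      have hmodeq : (k * b + j + 1) % n = ((k * b + j) % n + 1) % n := by
        rw [Nat.add_mod (k * b + j) 1 n, Nat.add_mod ((k * b + j) % n) 1 n,
          Nat.mod_mod_of_dvd _ dvd_rfl]
      have hceq : c ((k * b + j + 1) % n) = c ((k * b + j) % n + 1) := by
        rcases Nat.lt_or_ge ((k * b + j) % n + 1) n with h | h
        · rw [hmodeq, Nat.mod_eq_of_lt h]
        · have he : (k * b + j) % n + 1 = n := by omega
          rw [hmodeq, he, Nat.mod_self, hc0, hcn]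
      rw [hceq]
      have hd := hstep' ((k * b + j) % n) hres
      have hvb : v b ≤ σ ((k * b + j) % n) := hvle b j hj
      have hrb : rank b < k := hrlt b hb
      have hmul : k * v b ≤ k * σ ((k * b + j) % n) := Nat.mul_le_mul_left k hvb
      have hmb : m b ≤ k * σ ((k * b + j) % n) + k - 1 := by
        simp only [hm]
        omega
      have hle := hδ'le (m b) (k * σ ((k * b + j) % n) + k - 1) hmb
      linarith
    have key := hPp (m b) (fun j => c ((k * b + j) % n)) hsteps
    have e0 : k * b + 0 = k * b := Nat.add_zero _
    have ek : k * b + k = k * (b + 1) := by rw [Nat.mul_add, Nat.mul_one]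
    simp only [e0, ek] at key
    exact hεS (m b) key

/-- For every k ≥ 1, GR(f^k) = GR(f). -/
theorem gr_iterate_eq {X : Type*} [MetricSpace X] [CompactSpace X]
    (f : X → X) (hf : Continuous f) (k : ℕ) (hk : 1 ≤ k) :
    GR (f^[k]) = GR f :=
  Set.Subset.antisymm (GRaux.easy_dir f k hk) (GRaux.hard_dir f hf k hk)
end

section
/- If every point of X is strong chain equivalent to every other point (X is strong chain transitive for d), then for any Lipschitz Lyapunov function θ for f, θ is constant on X. -/
lemma chain_bound {X : Type*} [MetricSpace X] (f : X → X)
    (θ : X → ℝ) (K : NNReal) (hθ : LipschitzWith K θ)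
    (hlyap : ∀ x : X, θ (f x) ≤ θ x) (c : ℕ → X) :
    ∀ n : ℕ, θ (c n) ≤ θ (c 0) + K * ∑ i ∈ Finset.range n, dist (f (c i)) (c (i + 1)) := by
  intro n
  induction n with
  | zero => simp
  | succ n ih =>
    rw [Finset.sum_range_succ]
    have h1 : θ (c (n + 1)) ≤ θ (f (c n)) + K * dist (f (c n)) (c (n + 1)) := by
      have := hθ.dist_le_mul (c (n + 1)) (f (c n))
      have habs : |θ (c (n + 1)) - θ (f (c n))| ≤ K * dist (f (c n)) (c (n + 1)) := by
        rw [← Real.dist_eq, dist_comm (f (c n))] at *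
        exact this
      linarith [abs_le.mp habs |>.2]
    have h2 := hlyap (c n)
    linarith [mul_nonneg K.coe_nonneg (dist_nonneg (x := f (c n)) (y := c (n + 1)))]

/-- If X is strong chain transitive for d, then every Lipschitz Lyapunov function for
f is constant on X. -/
theorem lyapunov_const_of_strong_chain_transitive {X : Type*} [MetricSpace X]
    [CompactSpace X] (f : X → X) (hf : Continuous f)
    (hsct : ∀ x y : X, ∀ ε : ℝ, 0 < ε → IsStrongChain f ε x y)
    (θ : X → ℝ) (K : NNReal) (hθ : LipschitzWith K θ)
    (hlyap : ∀ x : X, θ (f x) ≤ θ x) :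
    ∀ x y : X, θ x = θ y := by
  have key : ∀ x y : X, θ y ≤ θ x := by
    intro x y
    by_contra h
    push_neg at h
    have hK : (0:ℝ) < K + 1 := by positivity
    set ε := (θ y - θ x) / (2 * (K + 1)) with hε
    have hεpos : 0 < ε := by
      apply div_pos (by linarith) (by positivity)
    obtain ⟨n, hn, c, hc0, hcn, hsum⟩ := hsct x y ε hεpos
    have := chain_bound f θ K hθ hlyap c n
    rw [hc0, hcn] at this
    have hKsum : (K:ℝ) * ∑ i ∈ Finset.range n, dist (f (c i)) (c (i + 1)) ≤ (K + 1) * ε := by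
      calc (K:ℝ) * ∑ i ∈ Finset.range n, dist (f (c i)) (c (i + 1))
          ≤ (K:ℝ) * ε := by
            apply mul_le_mul_of_nonneg_left hsum K.coe_nonneg
        _ ≤ (K + 1) * ε := by nlinarith
    have : θ y ≤ θ x + (K + 1) * ε := by linarith
    rw [hε] at this
    have : (K + 1) * ((θ y - θ x) / (2 * (K + 1))) = (θ y - θ x) / 2 := by
      field_simp
    linarith [this ▸ ‹θ y ≤ θ x + (K + 1) * ((θ y - θ x) / (2 * (K + 1)))›]
  exact fun x y => le_antisymm (key y x) (key x y)
end
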